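/- arXiv:2001.06998 — 2 statements merged into one kernel-verified Lean document; each statement's English description precedes it below -/
import Mathlib

section
/- Let F(x) = P₁(x) + δ_{g(·)≤0}(x) with g(x) = (l₁(A₁x), …, l_m(A_m x)), where P₁ is convex continuous, each A_i ∈ ℝ^{q_i × n}, each l_i: ℝ^{q_i} → ℝ is strictly convex, and {x : g(x) ≤ 0} ≠ ∅. Let x̄ ∈ Argmin F and suppose: (i) there exists a Lagrange multiplier λ̄ ∈ ℝ₊ᵐ for the problem of minimizing P₁ subject to g(x) ≤ 0 (i.e., inf_x {P₁(x) + ⟨λ̄, g(x)⟩} = inf F > −∞), and the function x ↦ P₁(x) + ⟨λ̄, g(x)⟩ is a KL function with exponent α ∈ (0,1); (ii) strict complementarity holds at (x̄, λ̄), i.e., for every i with λ̄_i = 0 one has l_i(A_i x̄) < 0. Then F satisfies the KL property with exponent α at x̄. -/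
open Set Filter Topology Metric Bornology RealInnerProductSpace
open scoped Classical

noncomputable section

abbrev Euc (n : ℕ) : Type := EuclideanSpace ℝ (Fin n)

/-- Convex subdifferential of a real-valued function on an inner product space. -/
def ConvexSubdiff {H : Type*} [NormedAddCommGroup H] [InnerProductSpace ℝ H]
    (P : H → ℝ) (x : H) : Set H :=
  {ζ | ∀ y, ⟪ζ, y - x⟫ ≤ P y - P x}

/-- Regular (Fréchet) subdifferential of an extended-real-valued function. -/
def RegularSubdiff {H : Type*} [NormedAddCommGroup H] [InnerProductSpace ℝ H]
    (h : H → EReal) (x : H) : Set H :=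
  {ζ | h x ≠ ⊤ ∧ h x ≠ ⊥ ∧ ∀ ε : ℝ, 0 < ε →
    ∀ᶠ z in 𝓝 x,
      (((h x).toReal + ⟪ζ, z - x⟫ - ε * ‖z - x‖ : ℝ) : EReal) ≤ h z}

/-- Limiting (Mordukhovich) subdifferential. -/
def LimSubdiff {H : Type*} [NormedAddCommGroup H] [InnerProductSpace ℝ H]
    (h : H → EReal) (x : H) : Set H :=
  {ζ | ∃ xs ζs : ℕ → H, (∀ k, ζs k ∈ RegularSubdiff h (xs k)) ∧
    Tendsto xs atTop (𝓝 x) ∧ Tendsto (fun k => h (xs k)) atTop (𝓝 (h x)) ∧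
    Tendsto ζs atTop (𝓝 ζ)}

/-- The Kurdyka–Łojasiewicz property with exponent `α` at a point. -/
def KLExpAt {H : Type*} [NormedAddCommGroup H] [InnerProductSpace ℝ H]
    (h : H → EReal) (α : ℝ) (xhat : H) : Prop :=
  ∃ a₀ : ℝ, 0 < a₀ ∧ ∃ a : ℝ, 0 < a ∧ ∃ V ∈ 𝓝 xhat, ∀ x ∈ V,
    h xhat < h x → h x < h xhat + (a : EReal) →
    1 ≤ a₀ * (1 - α) * ((h x).toReal - (h xhat).toReal) ^ (-α) *
        infDist 0 (LimSubdiff h x)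

/-- The general Kurdyka–Łojasiewicz property at a point. -/
def KLAt {H : Type*} [NormedAddCommGroup H] [InnerProductSpace ℝ H]
    (h : H → EReal) (xhat : H) : Prop :=
  ∃ a : ℝ, 0 < a ∧ ∃ V ∈ 𝓝 xhat, ∃ φ φ' : ℝ → ℝ,
    φ 0 = 0 ∧ ContinuousOn φ (Ico 0 a) ∧ ConcaveOn ℝ (Ico 0 a) φ ∧
    (∀ s ∈ Ioo 0 a, HasDerivAt φ (φ' s) s ∧ 0 < φ' s) ∧
    ∀ x ∈ V, h xhat < h x → h x < h xhat + (a : EReal) →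
      1 ≤ φ' ((h x).toReal - (h xhat).toReal) * infDist 0 (LimSubdiff h x)

/-- The extended objective of problem (P). -/
def Fobj {n m : ℕ} (f P1 P2 : Euc n → ℝ) (g : Fin m → Euc n → ℝ) (x : Euc n) : EReal :=
  if ∀ i, g i x ≤ 0 then ((f x + P1 x - P2 x : ℝ) : EReal) else ⊤

/-- The moving balls constraint functions. -/
def barG {n m : ℕ} (g : Fin m → Euc n → ℝ) (g' : Fin m → Euc n → Euc n)
    (x y : Euc n) (w : EuclideanSpace ℝ (Fin m)) (i : Fin m) : ℝ :=
  g i y + ⟪g' i y, x - y⟫ + w i / 2 * ‖x - y‖ ^ 2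

/-- The space `ℝⁿ × ℝⁿ × ℝᵐ` with the (L²) Euclidean inner product. -/
abbrev PS (n m : ℕ) : Type :=
  WithLp 2 (Euc n × WithLp 2 (Euc n × EuclideanSpace ℝ (Fin m)))

/-- The potential function `bar F`. -/
def barF {n m : ℕ} (f P1 P2 : Euc n → ℝ) (g : Fin m → Euc n → ℝ)
    (g' : Fin m → Euc n → Euc n)
    (p : PS n m) : EReal :=
  if ∀ i, barG g g' p.ofLp.1 p.ofLp.2.ofLp.1 p.ofLp.2.ofLp.2 i ≤ 0 then
    ((f p.ofLp.1 + P1 p.ofLp.1 - P2 p.ofLp.1 : ℝ) : EReal) else ⊤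

/-- Stationary points of problem (P). -/
def IsStationaryPt {n m : ℕ} (f P1 P2 : Euc n → ℝ) (f' : Euc n → Euc n)
    (g : Fin m → Euc n → ℝ) (g' : Fin m → Euc n → Euc n) (x : Euc n) : Prop :=
  (∀ i, g i x ≤ 0) ∧ ∃ lam : Fin m → ℝ, (∀ i, 0 ≤ lam i) ∧
    (∀ i, lam i * g i x = 0) ∧
    ∃ u ∈ ConvexSubdiff P1 x, ∃ v ∈ ConvexSubdiff P2 x,
      f' x + u - v + ∑ i, lam i • g' i x = 0

/-- Assumptions A (smoothness, Lipschitz gradients, level-boundedness) and B (MFCQ). -/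
def AssumptionAB {n m : ℕ} (f P1 P2 : Euc n → ℝ) (f' : Euc n → Euc n)
    (g : Fin m → Euc n → ℝ) (g' : Fin m → Euc n → Euc n)
    (Lf : ℝ) (Lg : Fin m → ℝ) : Prop :=
  (∀ x, HasGradientAt f (f' x) x) ∧ LipschitzWith Lf.toNNReal f' ∧
  ConvexOn ℝ univ P1 ∧ Continuous P1 ∧ ConvexOn ℝ univ P2 ∧ Continuous P2 ∧
  (∀ i x, HasGradientAt (g i) (g' i x) x) ∧
  (∀ i, LipschitzWith (Lg i).toNNReal (g' i)) ∧
  {x : Euc n | ∀ i, g i x ≤ 0}.Nonempty ∧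
  (∀ σ : ℝ, IsBounded {x | Fobj f P1 P2 g x ≤ (σ : EReal)}) ∧
  (∀ x : Euc n, (∀ i, g i x ≤ 0) → ∃ d, ∀ i, g i x = 0 → ⟪g' i x, d⟫ < 0)

/-- The sequences generated by the SCP_ls algorithm. -/
structure SCPlsSeq {n m : ℕ} (f P1 P2 : Euc n → ℝ) (f' : Euc n → Euc n)
    (g : Fin m → Euc n → ℝ) (g' : Fin m → Euc n → Euc n)
    (c Llo : ℝ) (x ξ : ℕ → Euc n) (Lfs : ℕ → ℝ)
    (Lgs : ℕ → EuclideanSpace ℝ (Fin m)) : Prop where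
  feas0 : ∀ i, g i (x 0) ≤ 0
  subgrad : ∀ t, ξ t ∈ ConvexSubdiff P2 (x t)
  Lf_lb : ∀ t, Llo ≤ Lfs t
  Lg_lb : ∀ t i, Llo ≤ Lgs t i
  bdd : ∃ M : ℝ, ∀ t, Lfs t ≤ M ∧ ∀ i, Lgs t i ≤ M
  feas_sub : ∀ t i, barG g g' (x (t + 1)) (x t) (Lgs t) i ≤ 0
  min : ∀ t z, (∀ i, barG g g' z (x t) (Lgs t) i ≤ 0) →
    ⟪f' (x t) - ξ t, x (t + 1) - x t⟫ + Lfs t / 2 * ‖x (t + 1) - x t‖ ^ 2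
        + P1 (x (t + 1))
      ≤ ⟪f' (x t) - ξ t, z - x t⟫ + Lfs t / 2 * ‖z - x t‖ ^ 2 + P1 z
  uniq : ∀ t z, (∀ i, barG g g' z (x t) (Lgs t) i ≤ 0) →
    ⟪f' (x t) - ξ t, z - x t⟫ + Lfs t / 2 * ‖z - x t‖ ^ 2 + P1 z
      ≤ ⟪f' (x t) - ξ t, x (t + 1) - x t⟫ + Lfs t / 2 * ‖x (t + 1) - x t‖ ^ 2
        + P1 (x (t + 1)) → z = x (t + 1)
  feas : ∀ t i, g i (x (t + 1)) ≤ 0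
  descent : ∀ t, f (x (t + 1)) + P1 (x (t + 1)) - P2 (x (t + 1)) ≤
    f (x t) + P1 (x t) - P2 (x t) - c / 2 * ‖x (t + 1) - x t‖ ^ 2

/-- Cluster points of a sequence (limits of subsequences). -/
def seqClusterPts {X : Type*} [TopologicalSpace X] (u : ℕ → X) : Set X :=
  {p | ∃ φ : ℕ → ℕ, StrictMono φ ∧ Tendsto (u ∘ φ) atTop (𝓝 p)}


/-!
The Lagrangian `L = P₁ + ∑ λᵢ (lᵢ ∘ Aᵢ)` is convex and attains its minimum `P₁ x̄` at `x̄`.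
Its KL inequality with exponent `α` yields, through Ekeland's principle applied to
`(L - L x̄) ^ (1 - α)`, the error bound `dist (x, argmin L) ≤ K (L x - L x̄) ^ (1 - α)` near `x̄`.
By strict convexity all minimizers of `L` share the values `Aᵢ x̄` on the constraints with
`λᵢ > 0`, and by strict complementarity the other constraints are inactive near `x̄`; so the
minimizers of `L` close to `x̄` are feasible points where `P₁ = P₁ x̄`. As `L ≤ P₁` on the feasible
set, this is an error bound of order `1 - α` for `F`, and for convex `F` the subgradient
inequality towards such a nearby minimizer turns it into the KL inequality with exponent `α`.
-/

theorem le_add_mul_rpow_of_rpow_one_sub_le {a b s α : ℝ} (ha : 0 < a) (hb : 0 ≤ b)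
    (hα0 : 0 ≤ α) (hα1 : α < 1) (h : a ^ (1 - α) ≤ b ^ (1 - α) + s) :
    a ≤ b + s * a ^ α / (1 - α) := by
  -- Bernoulli: `(b / a) ^ (1 - α) ≤ 1 + (1 - α) * (b / a - 1)`, the tangent line of a concave power
  have hbern := rpow_one_add_le_one_add_mul_self (s := b / a - 1)
    (by linarith [div_nonneg hb ha.le]) (p := 1 - α) (by linarith) (by linarith)
  have hap : 0 < a ^ (1 - α) := Real.rpow_pos_of_pos ha _
  rw [add_sub_cancel, Real.div_rpow hb ha.le, div_le_iff₀ hap] at hbern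
  have hsplit : a ^ (1 - α) * a ^ α = a := by rw [← Real.rpow_add ha]; simp
  have hkey : 0 ≤ (1 - α) * (b - a) + s * a ^ α := by
    have h1 : 0 ≤ (1 - α) * (b / a - 1) * a ^ (1 - α) + s := by nlinarith
    have h2 := mul_nonneg h1 (Real.rpow_nonneg ha.le α)
    have h3 : (b / a - 1) * a = b - a := by field_simp
    calc 0 ≤ ((1 - α) * (b / a - 1) * a ^ (1 - α) + s) * a ^ α := h2
      _ = (1 - α) * ((b / a - 1) * (a ^ (1 - α) * a ^ α)) + s * a ^ α := by ring
      _ = (1 - α) * (b - a) + s * a ^ α := by rw [hsplit, h3]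
  rw [← sub_le_iff_le_add', le_div_iff₀ (by linarith)]
  linarith

-- Ekeland's variational principle; in a proper space a minimizer of `g + κ * dist · x` does it.
theorem exists_forall_le_add_mul_dist {X : Type*} [MetricSpace X] [ProperSpace X] {g : X → ℝ}
    (hg : Continuous g) {m : ℝ} (hm : ∀ z, m ≤ g z) {κ : ℝ} (hκ : 0 < κ) (x : X) :
    ∃ y, κ * dist x y ≤ g x - g y ∧ ∀ z, g y ≤ g z + κ * dist z y := by
  have : Nonempty X := ⟨x⟩
  have hcoercive : Tendsto (fun z => g z + κ * dist z x) (cocompact X) atTop :=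
    tendsto_atTop_mono (fun z => by linarith [hm z])
      (tendsto_atTop_add_const_left _ m
        ((tendsto_dist_right_cocompact_atTop x).const_mul_atTop hκ))
  obtain ⟨y, hy⟩ :=
    (by fun_prop : Continuous fun z => g z + κ * dist z x).exists_forall_le hcoercive
  refine ⟨y, ?_, fun z => ?_⟩
  · have := hy x
    rw [dist_self, mul_zero, add_zero, dist_comm y] at this
    linarith
  · have := hy z
    nlinarith [dist_triangle z y x]

section ConvexSubdiff

variable {H : Type*} [NormedAddCommGroup H] [InnerProductSpace ℝ H] [CompleteSpace H] {φ : H → ℝ}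

theorem exists_mem_convexSubdiff_of_disjoint (hconv : ConvexOn ℝ univ φ) (hcont : Continuous φ)
    {w : H} {K : Set (H × ℝ)} (hK : Convex ℝ K) (hwK : (w, φ w) ∈ K)
    (hdisj : Disjoint {p : H × ℝ | φ p.1 < p.2} K) :
    ∃ ζ ∈ ConvexSubdiff φ w, ∀ q ∈ K, q.2 - φ w ≤ ⟪ζ, q.1 - w⟫ := by
  have hepi : Convex ℝ {p : H × ℝ | φ p.1 < p.2} := by
    simpa using hconv.convex_strict_epigraph
  obtain ⟨f, u, hfu, huf⟩ := geometric_hahn_banach_open hepi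
    (isOpen_lt (hcont.comp continuous_fst) continuous_snd) hK hdisj
  set v := (InnerProductSpace.toDual ℝ H).symm (f.comp (.inl ℝ H ℝ))
  set c := f (0, 1)
  have hf : ∀ y s, f (y, s) = ⟪v, y⟫ + s * c := fun y s => by
    rw [InnerProductSpace.toDual_symm_apply, ← smul_eq_mul, ← map_smul,
      ContinuousLinearMap.comp_apply, ContinuousLinearMap.inl_apply, ← map_add]
    simp
  -- the hyperplane is not vertical: it separates `(w, φ w) ∈ K` from `(w, φ w + 1)`
  have hc : c < 0 := by
    have := (hfu (w, φ w + 1) (by simp)).trans_le (huf _ hwK)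
    rw [hf, hf] at this
    linarith
  have key : ∀ y, ∀ q ∈ K, ⟪v, y⟫ + φ y * c ≤ ⟪v, q.1⟫ + q.2 * c := by
    intro y q hq
    refine le_of_forall_pos_lt_add fun ε hε => ?_
    have := (hfu (y, φ y + ε / -c) (by simp [div_pos hε (neg_pos.2 hc)])).trans_le (huf q hq)
    have hεc : ε / -c * c = -ε := by rw [div_neg, neg_mul, div_mul_cancel₀ _ hc.ne]
    rw [hf, hf, add_mul, hεc] at this
    linarith
  refine ⟨(-c)⁻¹ • v, fun y => ?_, fun q hq => ?_⟩
  · have := key y _ hwK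
    rw [real_inner_smul_left, inv_mul_le_iff₀ (neg_pos.2 hc), inner_sub_right]
    linarith
  · have := key w q hq
    rw [real_inner_smul_left, le_inv_mul_iff₀ (neg_pos.2 hc), inner_sub_right]
    linarith

theorem exists_mem_convexSubdiff (hconv : ConvexOn ℝ univ φ) (hcont : Continuous φ) (w : H) :
    (ConvexSubdiff φ w).Nonempty := by
  obtain ⟨ζ, hζ, -⟩ := exists_mem_convexSubdiff_of_disjoint hconv hcont (convex_singleton _)
    (mem_singleton (w, φ w)) (by simp)
  exact ⟨ζ, hζ⟩

theorem exists_mem_convexSubdiff_norm_le (hconv : ConvexOn ℝ univ φ) (hcont : Continuous φ)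
    {w : H} {μ : ℝ} (hμ : 0 ≤ μ) (hmin : ∀ y, φ w ≤ φ y + μ * ‖y - w‖) :
    ∃ ζ ∈ ConvexSubdiff φ w, ‖ζ‖ ≤ μ := by
  have hcone : ConcaveOn ℝ univ fun y => φ w - μ * ‖y - w‖ :=
    ((concaveOn_const (φ w) convex_univ).sub ((convexOn_dist w convex_univ).smul hμ)).congr
      fun y _ => by simp [dist_eq_norm]
  have hK : Convex ℝ {q : H × ℝ | q.2 ≤ φ w - μ * ‖q.1 - w‖} := by
    simpa using hcone.convex_hypograph
  have hdisj : Disjoint {p : H × ℝ | φ p.1 < p.2} {q | q.2 ≤ φ w - μ * ‖q.1 - w‖} :=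
    disjoint_left.2 fun p (hp : φ p.1 < p.2) (hq : p.2 ≤ _) => by linarith [hmin p.1]
  obtain ⟨ζ, hζ, hζK⟩ :=
    exists_mem_convexSubdiff_of_disjoint (w := w) hconv hcont hK (by simp) hdisj
  refine ⟨ζ, hζ, ?_⟩
  have := hζK (w - ζ, φ w - μ * ‖ζ‖) (by simp)
  simp only [sub_sub_cancel_left, inner_neg_right, real_inner_self_eq_norm_sq] at this
  nlinarith [norm_nonneg ζ]

end ConvexSubdiff

section LimSubdiff

variable {H : Type*} [NormedAddCommGroup H] [InnerProductSpace ℝ H]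

theorem regularSubdiff_subset_limSubdiff (h : H → EReal) (x : H) :
    RegularSubdiff h x ⊆ LimSubdiff h x := fun ζ hζ =>
  ⟨fun _ => x, fun _ => ζ, fun _ => hζ, tendsto_const_nhds, tendsto_const_nhds,
    tendsto_const_nhds⟩

theorem convexSubdiff_subset_limSubdiff {φ : H → ℝ} {h : H → EReal} {x : H}
    (hx : h x = φ x) (hle : ∀ z, (φ z : EReal) ≤ h z) :
    ConvexSubdiff φ x ⊆ LimSubdiff h x := by
  refine fun ζ hζ => regularSubdiff_subset_limSubdiff h x
    ⟨by simp [hx], by simp [hx], fun ε hε => Eventually.of_forall fun z => ?_⟩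
  rw [hx, EReal.toReal_coe]
  refine le_trans ?_ (hle z)
  have := hζ z
  exact_mod_cast (by nlinarith [norm_nonneg (z - x)] :
    φ x + ⟪ζ, z - x⟫ - ε * ‖z - x‖ ≤ φ z)

variable {φ : H → ℝ} {C : Set H} [DecidablePred (· ∈ C)] {x ζ : H}

theorem mem_and_inner_le_of_mem_regularSubdiff (hC : Convex ℝ C) (hφ : ConvexOn ℝ C φ)
    (hζ : ζ ∈ RegularSubdiff (fun z => if z ∈ C then (φ z : EReal) else ⊤) x) :
    x ∈ C ∧ ∀ y ∈ C, ⟪ζ, y - x⟫ ≤ φ y - φ x := by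
  obtain ⟨hxtop, -, hloc⟩ := hζ
  have hx : x ∈ C := by_contra fun hx => hxtop (if_neg hx)
  refine ⟨hx, fun y hy => ?_⟩
  -- the local inequality, read along the segment from `x` towards `y`, becomes global by convexity
  have hslack : ∀ ε > 0, ⟪ζ, y - x⟫ ≤ φ y - φ x + ε * ‖y - x‖ := by
    intro ε hε
    have hseg : Tendsto (fun t : ℝ => x + t • (y - x)) (𝓝[>] 0) (𝓝 x) :=
      ((continuous_const.add (continuous_id.smul continuous_const)).tendsto' 0 x
        (by simp)).mono_left nhdsWithin_le_nhds
    obtain ⟨t, hloc_t, ht0, ht1⟩ :=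
      ((hseg.eventually (hloc ε hε)).and (Ioo_mem_nhdsGT one_pos)).exists
    have hmem : x + t • (y - x) ∈ C := hC.add_smul_sub_mem hx hy ⟨ht0.le, ht1.le⟩
    have hconv := hφ.2 hx hy (sub_nonneg.2 ht1.le) ht0.le (sub_add_cancel 1 t)
    rw [show (1 - t) • x + t • y = x + t • (y - x) by module] at hconv
    simp only [if_pos hx, if_pos hmem, EReal.toReal_coe, add_sub_cancel_left,
      inner_smul_right, norm_smul, Real.norm_of_nonneg ht0.le] at hloc_t
    have hloc_t : φ x + t * ⟪ζ, y - x⟫ - ε * (t * ‖y - x‖) ≤ φ (x + t • (y - x)) := by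
      exact_mod_cast hloc_t
    simp only [smul_eq_mul] at hconv
    nlinarith
  refine le_of_forall_pos_lt_add fun ε hε => ?_
  have hδ : 0 < ε / (‖y - x‖ + 1) := by positivity
  have := hslack _ hδ
  have : ε / (‖y - x‖ + 1) * ‖y - x‖ < ε := by
    rw [div_mul_eq_mul_div, div_lt_iff₀ (by positivity)]
    nlinarith [norm_nonneg (y - x)]
  linarith

theorem mem_and_inner_le_of_mem_limSubdiff (hC : Convex ℝ C) (hCc : IsClosed C)
    (hφ : ConvexOn ℝ C φ)
    (hζ : ζ ∈ LimSubdiff (fun z => if z ∈ C then (φ z : EReal) else ⊤) x) :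
    x ∈ C ∧ ∀ y ∈ C, ⟪ζ, y - x⟫ ≤ φ y - φ x := by
  obtain ⟨xs, ζs, hreg, hxs, hval, hζs⟩ := hζ
  have hstep k := mem_and_inner_le_of_mem_regularSubdiff hC hφ (hreg k)
  have hx : x ∈ C := hCc.mem_of_tendsto hxs (Eventually.of_forall fun k => (hstep k).1)
  have hφxs : Tendsto (fun k => φ (xs k)) atTop (𝓝 (φ x)) := by
    simpa only [if_pos (hstep _).1, if_pos hx, EReal.tendsto_coe] using hval
  refine ⟨hx, fun y hy => le_of_tendsto_of_tendsto' (hζs.inner (tendsto_const_nhds.sub hxs))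
    (tendsto_const_nhds.sub hφxs) fun k => (hstep k).2 y hy⟩

end LimSubdiff

section KL

variable {H : Type*} [NormedAddCommGroup H] [InnerProductSpace ℝ H]

theorem KLExpAt.exists_mul_rpow_le_norm {φ : H → ℝ} {α : ℝ} {x₀ : H}
    (hKL : KLExpAt (fun z => (φ z : EReal)) α x₀) (hα : α < 1) (hφ : ContinuousAt φ x₀) :
    ∃ c > 0, ∀ᶠ w in 𝓝 x₀, φ x₀ < φ w → ∀ ζ ∈ ConvexSubdiff φ w,
      c * (φ w - φ x₀) ^ α ≤ ‖ζ‖ := by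
  obtain ⟨a₀, ha₀, a, ha, V, hV, hKL⟩ := hKL
  have hK : 0 < a₀ * (1 - α) := mul_pos ha₀ (sub_pos.2 hα)
  refine ⟨(a₀ * (1 - α))⁻¹, inv_pos.2 hK, ?_⟩
  filter_upwards [hV, hφ.eventually (gt_mem_nhds (lt_add_of_pos_right (φ x₀) ha))]
    with w hwV hwa hlt ζ hζ
  have hineq := hKL w hwV (EReal.coe_lt_coe_iff.2 hlt)
    (show ((φ w : ℝ) : EReal) < φ x₀ + a by exact_mod_cast hwa)
  have hD : infDist 0 (LimSubdiff (fun z => (φ z : EReal)) w) ≤ ‖ζ‖ :=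
    (infDist_le_dist_of_mem (convexSubdiff_subset_limSubdiff rfl (fun _ => le_rfl) hζ)).trans_eq
      (dist_zero_left ζ)
  have ht : 0 < φ w - φ x₀ := sub_pos.2 hlt
  simp only [EReal.toReal_coe, Real.rpow_neg ht.le] at hineq
  rw [inv_mul_le_iff₀ hK]
  calc (φ w - φ x₀) ^ α = (φ w - φ x₀) ^ α * 1 := (mul_one _).symm
    _ ≤ (φ w - φ x₀) ^ α * (a₀ * (1 - α) * ((φ w - φ x₀) ^ α)⁻¹ *
        infDist 0 (LimSubdiff (fun z => (φ z : EReal)) w)) := by gcongr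
    _ = a₀ * (1 - α) * infDist 0 (LimSubdiff (fun z => (φ z : EReal)) w) := by field_simp
    _ ≤ a₀ * (1 - α) * ‖ζ‖ := by gcongr
theorem ConvexOn.eventually_exists_norm_sub_le_rpow [ProperSpace H] {φ : H → ℝ}
    (hconv : ConvexOn ℝ univ φ) (hcont : Continuous φ) {x₀ : H} (hmin : ∀ z, φ x₀ ≤ φ z)
    {α c : ℝ} (hα0 : 0 ≤ α) (hα1 : α < 1) (hc : 0 < c)
    (hKL : ∀ᶠ w in 𝓝 x₀, φ x₀ < φ w → ∀ ζ ∈ ConvexSubdiff φ w, c * (φ w - φ x₀) ^ α ≤ ‖ζ‖)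
    {U : Set H} (hU : U ∈ 𝓝 x₀) :
    ∀ᶠ x in 𝓝 x₀, ∃ y ∈ U, φ y = φ x₀ ∧
      ‖x - y‖ ≤ 2 / (c * (1 - α)) * (φ x - φ x₀) ^ (1 - α) := by
  set κ := c * (1 - α) / 2 with hκ_def
  have hκ : 0 < κ := by have := sub_pos.2 hα1; positivity
  set g : H → ℝ := fun z => (φ z - φ x₀) ^ (1 - α)
  have hg : Continuous g :=
    (hcont.sub continuous_const).rpow_const fun _ => Or.inr (by linarith)
  obtain ⟨ρ, hρ, hball⟩ := Metric.mem_nhds_iff.1 (inter_mem hU hKL)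
  have hnear : Tendsto (fun x => ‖x - x₀‖ + g x / κ) (𝓝 x₀) (𝓝 0) := by
    have := (show Continuous fun x => ‖x - x₀‖ + g x / κ by fun_prop).tendsto x₀
    simpa [g, Real.zero_rpow (sub_pos.2 hα1).ne'] using this
  filter_upwards [hnear.eventually (gt_mem_nhds hρ)] with x hx
  obtain ⟨y, hxy, hy⟩ := exists_forall_le_add_mul_dist hg
    (fun z => Real.rpow_nonneg (sub_nonneg.2 (hmin z)) _) hκ x
  have hxy' : ‖x - y‖ ≤ g x / κ := by
    rw [le_div_iff₀ hκ, ← dist_eq_norm, mul_comm]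
    linarith [Real.rpow_nonneg (sub_nonneg.2 (hmin y)) (1 - α)]
  have hyρ : y ∈ ball x₀ ρ := by
    rw [mem_ball, dist_eq_norm]
    calc ‖y - x₀‖ ≤ ‖x - y‖ + ‖x - x₀‖ := by
          simpa [norm_sub_rev x y] using norm_sub_le_norm_sub_add_norm_sub y x x₀
      _ < ρ := by linarith
  refine ⟨y, (hball hyρ).1, ?_, ?_⟩
  · -- otherwise `y` has slope at most `(c / 2) (φ y - φ x₀) ^ α`, hence a subgradient that short
    by_contra hne
    have hpos : 0 < φ y - φ x₀ := (sub_nonneg.2 (hmin y)).lt_of_ne (sub_ne_zero.2 hne).symm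
    have hslope : ∀ z, φ y ≤ φ z + c / 2 * (φ y - φ x₀) ^ α * ‖z - y‖ := fun z => by
      have := le_add_mul_rpow_of_rpow_one_sub_le hpos (sub_nonneg.2 (hmin z)) hα0 hα1 (hy z)
      rw [dist_eq_norm, show κ * ‖z - y‖ * (φ y - φ x₀) ^ α / (1 - α)
        = c / 2 * (φ y - φ x₀) ^ α * ‖z - y‖ by
        rw [hκ_def]; field_simp [(sub_pos.2 hα1).ne']] at this
      linarith
    obtain ⟨ζ, hζ, hζnorm⟩ := exists_mem_convexSubdiff_norm_le hconv hcont
      (by positivity) hslope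
    have := (hball hyρ).2 (sub_pos.1 hpos) ζ hζ
    have := mul_pos hc (Real.rpow_pos_of_pos hpos α)
    linarith
  · calc ‖x - y‖ ≤ g x / κ := hxy'
      _ = 2 / (c * (1 - α)) * (φ x - φ x₀) ^ (1 - α) := by
        simp only [g, hκ_def]; field_simp

theorem klExpAt_ite_of_eventually_exists_norm_sub_le [CompleteSpace H] {φ : H → ℝ}
    (hconv : ConvexOn ℝ univ φ) (hcont : Continuous φ) {C : Set H} [DecidablePred (· ∈ C)] (hC : Convex ℝ C)
    (hCc : IsClosed C) {x₀ : H} (hx₀ : x₀ ∈ C) {α K : ℝ} (hα : α < 1) (hK : 0 < K)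
    (heb : ∀ᶠ x in 𝓝 x₀, x ∈ C →
      ∃ y ∈ C, φ y ≤ φ x₀ ∧ ‖x - y‖ ≤ K * (φ x - φ x₀) ^ (1 - α)) :
    KLExpAt (fun z => if z ∈ C then (φ z : EReal) else ⊤) α x₀ := by
  refine ⟨K / (1 - α), div_pos hK (sub_pos.2 hα), 1, one_pos, _, heb,
    fun x hxeb hlt hlt1 => ?_⟩
  have hxC : x ∈ C := by
    by_contra hxC
    simp only [if_neg hxC, if_pos hx₀] at hlt1
    exact not_top_lt hlt1
  obtain ⟨y, hyC, hyφ, hxy⟩ := hxeb hxC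
  simp only [if_pos hxC, if_pos hx₀, EReal.toReal_coe, EReal.coe_lt_coe_iff] at hlt ⊢
  set t := φ x - φ x₀
  have ht : 0 < t := sub_pos.2 hlt
  have hbound : ∀ ζ ∈ LimSubdiff (fun z => if z ∈ C then (φ z : EReal) else ⊤) x,
      t ^ α / K ≤ ‖ζ‖ := fun ζ hζ => by
    have hinner := (mem_and_inner_le_of_mem_limSubdiff hC hCc
      (hconv.subset (subset_univ C) hC) hζ).2 y hyC
    have hsplit : t ^ α * t ^ (1 - α) = t := by rw [← Real.rpow_add ht]; simp
    have : t ≤ ‖ζ‖ * (K * t ^ (1 - α)) :=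
      calc t ≤ ⟪ζ, x - y⟫ := by
            rw [← neg_sub y x, inner_neg_right]; linarith
        _ ≤ ‖ζ‖ * ‖x - y‖ := real_inner_le_norm ζ (x - y)
        _ ≤ ‖ζ‖ * (K * t ^ (1 - α)) := by gcongr
    rw [div_le_iff₀ hK]
    refine le_of_mul_le_mul_right ?_ (Real.rpow_pos_of_pos ht (1 - α))
    nlinarith
  obtain ⟨ζ, hζ⟩ := exists_mem_convexSubdiff hconv hcont x
  have hne : (LimSubdiff (fun z => if z ∈ C then (φ z : EReal) else ⊤) x).Nonempty :=
    ⟨ζ, convexSubdiff_subset_limSubdiff (by simp [hxC]) (fun z => by split_ifs <;> simp) hζ⟩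
  have hD := (le_infDist hne).2 fun ζ hζ => (hbound ζ hζ).trans_eq (dist_zero_left ζ).symm
  rw [div_mul_cancel₀ _ (sub_pos.2 hα).ne', Real.rpow_neg ht.le]
  calc (1 : ℝ) = K * (t ^ α)⁻¹ * (t ^ α / K) := by field_simp
    _ ≤ _ := by gcongr

end KL

section Lagrangian

variable {ι : Type*} {E : Type*} [AddCommGroup E] [Module ℝ E]
  {F : ι → Type*} [∀ i, AddCommGroup (F i)] [∀ i, Module ℝ (F i)]
  {P : E → ℝ} (A : ∀ i, E →ₗ[ℝ] F i) {l : ∀ i, F i → ℝ} {lam : ι → ℝ}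

theorem convex_setOf_forall_comp_nonpos (hl : ∀ i, ConvexOn ℝ univ (l i)) :
    Convex ℝ {z | ∀ i, l i (A i z) ≤ 0} := by
  rw [ofPred_forall]
  exact convex_iInter fun i => by simpa using ((hl i).comp_linearMap (A i)).convex_le 0

variable [Fintype ι]

theorem sum_mul_comp_nonpos (hlam : ∀ i, 0 ≤ lam i) {z : E} (hz : ∀ i, l i (A i z) ≤ 0) :
    ∑ i, lam i * l i (A i z) ≤ 0 :=
  Finset.sum_nonpos fun i _ => mul_nonpos_of_nonneg_of_nonpos (hlam i) (hz i)

theorem ConvexOn.add_sum_mul_comp (hP : ConvexOn ℝ univ P) (hl : ∀ i, ConvexOn ℝ univ (l i))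
    (hlam : ∀ i, 0 ≤ lam i) : ConvexOn ℝ univ fun z => P z + ∑ i, lam i * l i (A i z) := by
  have hsum := Finset.univ.sum_induction (fun i z => lam i * l i (A i z)) (ConvexOn ℝ univ)
    (fun _ _ => ConvexOn.add) (convexOn_const 0 convex_univ)
    fun i _ => ((hl i).comp_linearMap (A i)).smul (hlam i)
  rw [Finset.sum_fn] at hsum
  exact hP.add hsum

theorem map_eq_of_add_sum_mul_comp_le (hP : ConvexOn ℝ univ P)
    (hl : ∀ i, StrictConvexOn ℝ univ (l i)) (hlam : ∀ i, 0 ≤ lam i) {m : ℝ}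
    (hm : ∀ z, m ≤ P z + ∑ i, lam i * l i (A i z)) {w w' : E}
    (hw : P w + ∑ i, lam i * l i (A i w) ≤ m) (hw' : P w' + ∑ i, lam i * l i (A i w') ≤ m)
    {i : ι} (hi : lam i ≠ 0) : A i w = A i w' := by
  by_contra hne
  set mid : E := (1 / 2 : ℝ) • w + (1 / 2 : ℝ) • w'
  have hAmid j : A j mid = (1 / 2 : ℝ) • A j w + (1 / 2 : ℝ) • A j w' := by
    simp only [mid, map_add, map_smul]
  have hPmid := hP.2 (mem_univ w) (mem_univ w') (by norm_num) (by norm_num)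
    (by norm_num : (1 / 2 : ℝ) + 1 / 2 = 1)
  have hle j : lam j * l j (A j mid)
      ≤ 1 / 2 * (lam j * l j (A j w)) + 1 / 2 * (lam j * l j (A j w')) := by
    have := (hl j).convexOn.2 (mem_univ (A j w)) (mem_univ (A j w')) (by norm_num) (by norm_num)
      (by norm_num : (1 / 2 : ℝ) + 1 / 2 = 1)
    rw [smul_eq_mul, smul_eq_mul] at this
    rw [hAmid]
    nlinarith [mul_le_mul_of_nonneg_left this (hlam j)]
  have hlt : lam i * l i (A i mid)
      < 1 / 2 * (lam i * l i (A i w)) + 1 / 2 * (lam i * l i (A i w')) := by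
    have := (hl i).2 (mem_univ (A i w)) (mem_univ (A i w')) hne (by norm_num) (by norm_num)
      (by norm_num : (1 / 2 : ℝ) + 1 / 2 = 1)
    rw [smul_eq_mul, smul_eq_mul] at this
    rw [hAmid]
    nlinarith [mul_lt_mul_of_pos_left this ((hlam i).lt_of_ne' hi)]
  have hsum := Finset.sum_lt_sum (fun j _ => hle j) ⟨i, Finset.mem_univ i, hlt⟩
  rw [Finset.sum_add_distrib, ← Finset.mul_sum, ← Finset.mul_sum] at hsum
  simp only [smul_eq_mul] at hPmid
  linarith [hm mid]

theorem forall_comp_nonpos_and_le_of_add_sum_mul_comp_le (hP : ConvexOn ℝ univ P)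
    (hl : ∀ i, StrictConvexOn ℝ univ (l i)) (hlam : ∀ i, 0 ≤ lam i) {x₀ : E}
    (hx₀ : ∀ i, l i (A i x₀) ≤ 0) (hm : ∀ z, P x₀ ≤ P z + ∑ i, lam i * l i (A i z)) {y : E}
    (hy : P y + ∑ i, lam i * l i (A i y) ≤ P x₀) (hinact : ∀ i, lam i = 0 → l i (A i y) < 0) :
    (∀ i, l i (A i y) ≤ 0) ∧ P y ≤ P x₀ := by
  have hsum₀ := sum_mul_comp_nonpos A hlam hx₀
  have hAy i (hi : lam i ≠ 0) : A i y = A i x₀ :=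
    map_eq_of_add_sum_mul_comp_le A hP hl hlam hm hy (by linarith) hi
  have hsum : ∑ i, lam i * l i (A i y) = ∑ i, lam i * l i (A i x₀) :=
    Finset.sum_congr rfl fun i _ => by by_cases hi : lam i = 0 <;> simp [hi, hAy]
  refine ⟨fun i => ?_, by linarith [hm x₀]⟩
  by_cases hi : lam i = 0
  · exact (hinact i hi).le
  · exact hAy i hi ▸ hx₀ i

end Lagrangian

theorem stmt15_general {n m : ℕ} (q : Fin m → ℕ) (P1 : Euc n → ℝ)
    (A : ∀ i, Euc n →L[ℝ] Euc (q i)) (l : ∀ i, Euc (q i) → ℝ)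
    (hP1conv : ConvexOn ℝ univ P1) (hP1cont : Continuous P1)
    (hl : ∀ i, StrictConvexOn ℝ univ (l i))
    (α : ℝ) (hα0 : 0 < α) (hα1 : α < 1)
    (xbar : Euc n) (hxbar_feas : ∀ i, l i (A i xbar) ≤ 0)
    (lam : Fin m → ℝ) (hlam : ∀ i, 0 ≤ lam i)
    (hmult : ∀ z, P1 xbar ≤ P1 z + ∑ i, lam i * l i (A i z))
    (hKL : ∀ x, (LimSubdiff
        (fun z => ((P1 z + ∑ i, lam i * l i (A i z) : ℝ) : EReal)) x).Nonempty →
      KLExpAt (fun z => ((P1 z + ∑ i, lam i * l i (A i z) : ℝ) : EReal)) α x)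
    (hsc : ∀ i, lam i = 0 → l i (A i xbar) < 0) :
    KLExpAt
      (fun z : Euc n =>
        if ∀ i, l i (A i z) ≤ 0 then ((P1 z : ℝ) : EReal) else ⊤) α xbar := by
  let A' i : Euc n →ₗ[ℝ] Euc (q i) := A i
  set L : Euc n → ℝ := fun z => P1 z + ∑ i, lam i * l i (A i z)
  have hlcont i : Continuous (l i) :=
    continuousOn_univ.1 ((hl i).convexOn.continuousOn isOpen_univ)
  have hLconv : ConvexOn ℝ univ L :=
    hP1conv.add_sum_mul_comp A' (fun i => (hl i).convexOn) hlam
  have hLcont : Continuous L := by fun_prop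
  have hsum_nonpos {z} (hz : ∀ i, l i (A i z) ≤ 0) : ∑ i, lam i * l i (A i z) ≤ 0 :=
    sum_mul_comp_nonpos A' hlam hz
  have hLxbar : L xbar = P1 xbar := by
    linarith [hmult xbar, hsum_nonpos hxbar_feas, show L xbar = P1 xbar + _ from rfl]
  obtain ⟨c, hc, hKLc⟩ := (hKL xbar ⟨_, convexSubdiff_subset_limSubdiff rfl (fun _ => le_rfl)
    (exists_mem_convexSubdiff hLconv hLcont xbar).some_mem⟩).exists_mul_rpow_le_norm hα1
    hLcont.continuousAt
  have hinactive : ∀ᶠ z in 𝓝 xbar, ∀ i, lam i = 0 → l i (A i z) < 0 :=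
    eventually_all.2 fun i => eventually_imp_distrib_left.2 fun hi =>
      ((hlcont i).comp (A i).continuous).continuousAt.eventually_lt continuousAt_const (hsc i hi)
  have hCc : IsClosed {z | ∀ i, l i (A i z) ≤ 0} := by
    rw [ofPred_forall]
    exact isClosed_iInter fun i => isClosed_le ((hlcont i).comp (A i).continuous) continuous_const
  refine klExpAt_ite_of_eventually_exists_norm_sub_le hP1conv hP1cont
    (convex_setOf_forall_comp_nonpos A' fun i => (hl i).convexOn) hCc hxbar_feas hα1
    (K := 2 / (c * (1 - α))) (by have := sub_pos.2 hα1; positivity) ?_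
  filter_upwards [hLconv.eventually_exists_norm_sub_le_rpow hLcont (hLxbar ▸ hmult) hα0.le hα1
    hc hKLc hinactive] with x ⟨y, hyU, hLy, hxy⟩ hxC
  obtain ⟨hyC, hPy⟩ := forall_comp_nonpos_and_le_of_add_sum_mul_comp_le A' hP1conv hl
    hlam hxbar_feas hmult (hLy.trans hLxbar).le hyU
  refine ⟨y, hyC, hPy, hxy.trans ?_⟩
  have hLx : L x ≤ P1 x := by linarith [hsum_nonpos hxC, show L x = P1 x + _ from rfl]
  gcongr
  · linarith [hmult x]
  · linarith

/-- KL exponent of the extended objective of a multiply constrained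
convex problem deduced from its Lagrangian, under strict complementarity. -/
theorem stmt15 {n m : ℕ} (q : Fin m → ℕ) (P1 : Euc n → ℝ)
    (A : ∀ i, Euc n →L[ℝ] Euc (q i)) (l : ∀ i, Euc (q i) → ℝ)
    (hP1conv : ConvexOn ℝ univ P1) (hP1cont : Continuous P1)
    (hl : ∀ i, StrictConvexOn ℝ univ (l i))
    (α : ℝ) (hα0 : 0 < α) (hα1 : α < 1)
    (xbar : Euc n) (hxbar_feas : ∀ i, l i (A i xbar) ≤ 0)
    (hxbar_min : ∀ z, (∀ i, l i (A i z) ≤ 0) → P1 xbar ≤ P1 z)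
    (lam : Fin m → ℝ) (hlam : ∀ i, 0 ≤ lam i)
    (hmult : ∀ z, P1 xbar ≤ P1 z + ∑ i, lam i * l i (A i z))
    (hKL : ∀ x, (LimSubdiff
        (fun z => ((P1 z + ∑ i, lam i * l i (A i z) : ℝ) : EReal)) x).Nonempty →
      KLExpAt (fun z => ((P1 z + ∑ i, lam i * l i (A i z) : ℝ) : EReal)) α x)
    (hsc : ∀ i, lam i = 0 → l i (A i xbar) < 0) :
    KLExpAt
      (fun z : Euc n =>
        if ∀ i, l i (A i z) ≤ 0 then ((P1 z : ℝ) : EReal) else ⊤) α xbar :=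
  stmt15_general q P1 A l hP1conv hP1cont hl α hα0 hα1 xbar hxbar_feas lam hlam hmult hKL hsc
end
end

section
/- Let g(x) = ‖Ax − b‖_{LL₂,γ} − δ with A ∈ ℝ^{q×n} having full row rank, b ∈ ℝ^q, γ > 0 and δ > 0, and let F(x) = ‖x‖₁ − μ‖x‖ + δ_{g(·)≤0}(x) with μ ∈ [0,1]. Then: (i) the MFCQ holds on the whole feasible set {x : g(x) ≤ 0}, i.e., ∇g(x̂) ≠ 0 for every x̂ with g(x̂) = 0 (so a descent direction exists at every active feasible point); (ii) if μ ∈ [0,1), F is level-bounded; (iii) if μ = 1 and A has no zero columns, F is level-bounded. -/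
open Set Filter Topology Metric Bornology RealInnerProductSpace
open scoped Classical

noncomputable section

/-- The `ℓ₁` norm on `ℝᵏ`. -/
def l1norm {k : ℕ} (x : Euc k) : ℝ := ∑ i, |x i|

/-- The Lorentzian norm `‖y‖_{LL₂,γ} = ∑ log(1 + yᵢ²/γ²)`. -/
def LorNorm {q : ℕ} (γ : ℝ) (y : Euc q) : ℝ := ∑ i, Real.log (1 + (y i) ^ 2 / γ ^ 2)

/-- The extended objective `‖x‖₁ − μ‖x‖ + δ_{‖A·−b‖_{LL₂,γ}≤δ}`. -/
def Flor {n q : ℕ} (A : Euc n →L[ℝ] Euc q) (b : Euc q) (μ δ γ : ℝ) (x : Euc n) : EReal :=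
  if LorNorm γ (A x - b) - δ ≤ 0 then ((l1norm x - μ * ‖x‖ : ℝ) : EReal) else ⊤


section Stmt19Aux

private lemma norm_le_l1 {k : ℕ} (x : Euc k) : ‖x‖ ≤ l1norm x := by
  rw [EuclideanSpace.norm_eq]
  have h1 : ∑ i, ‖x i‖ ^ 2 ≤ (l1norm x) ^ 2 := by
    simpa [l1norm, Real.norm_eq_abs, sq_abs] using
      Finset.sum_sq_le_sq_sum_of_nonneg (f := fun i => |x i|) (s := Finset.univ)
        (fun i _ => abs_nonneg _)
  calc Real.sqrt (∑ i, ‖x i‖ ^ 2) ≤ Real.sqrt ((l1norm x) ^ 2) := Real.sqrt_le_sqrt h1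
    _ = l1norm x := Real.sqrt_sq (by unfold l1norm; positivity)

private lemma lor_bound {q : ℕ} {γ δ : ℝ} (hγ : 0 < γ) (v : Euc q)
    (hL : LorNorm γ v ≤ δ) : ‖v‖ ≤ Real.sqrt (q * (γ ^ 2 * (Real.exp δ - 1))) := by
  have hterm : ∀ i, (v i) ^ 2 ≤ γ ^ 2 * (Real.exp δ - 1) := by
    intro i
    have h1 : Real.log (1 + (v i) ^ 2 / γ ^ 2) ≤ δ :=
      le_trans (Finset.single_le_sum
        (f := fun i => Real.log (1 + (v i) ^ 2 / γ ^ 2))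
        (fun i _ => Real.log_nonneg (le_add_of_nonneg_right (by positivity)))
        (Finset.mem_univ i)) hL
    have hpos : (0:ℝ) < 1 + (v i) ^ 2 / γ ^ 2 := by positivity
    have h2 : 1 + (v i) ^ 2 / γ ^ 2 ≤ Real.exp δ := by
      calc 1 + (v i) ^ 2 / γ ^ 2 = Real.exp (Real.log (1 + (v i) ^ 2 / γ ^ 2)) :=
            (Real.exp_log hpos).symm
        _ ≤ Real.exp δ := Real.exp_le_exp.mpr h1
    have h3 : (v i) ^ 2 / γ ^ 2 ≤ Real.exp δ - 1 := by linarith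
    have hγ2 : (0:ℝ) < γ ^ 2 := by positivity
    calc (v i) ^ 2 = γ ^ 2 * ((v i) ^ 2 / γ ^ 2) := by field_simp
      _ ≤ γ ^ 2 * (Real.exp δ - 1) := mul_le_mul_of_nonneg_left h3 hγ2.le
  rw [EuclideanSpace.norm_eq]
  apply Real.sqrt_le_sqrt
  have h4 : ∑ i, ‖v i‖ ^ 2 ≤ ∑ _i : Fin q, γ ^ 2 * (Real.exp δ - 1) := by
    apply Finset.sum_le_sum
    intro i _
    simpa [Real.norm_eq_abs, sq_abs] using hterm i
  simpa [Finset.card_univ] using h4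

private lemma flor_mem {n q : ℕ} {A : Euc n →L[ℝ] Euc q} {b : Euc q} {μ δ γ σ : ℝ}
    {x : Euc n} (hx : Flor A b μ δ γ x ≤ ((σ : ℝ) : EReal)) :
    LorNorm γ (A x - b) - δ ≤ 0 ∧ l1norm x - μ * ‖x‖ ≤ σ := by
  unfold Flor at hx
  by_cases hc : LorNorm γ (A x - b) - δ ≤ 0
  · rw [if_pos hc] at hx
    exact ⟨hc, by exact_mod_cast hx⟩
  · rw [if_neg hc] at hx
    exact absurd (top_le_iff.mp hx) (EReal.coe_ne_top σ)

end Stmt19Aux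

set_option maxHeartbeats 2000000 in
/-- for the Lorentzian-norm constrained model with `A` of full row
rank: (i) MFCQ holds on the whole feasible set (the gradient of the constraint is
nonzero at active points, hence a descent direction exists); (ii) if `μ ∈ [0,1)`,
`F` is level-bounded; (iii) if `μ = 1` and `A` has no zero columns, `F` is
level-bounded. -/
theorem stmt19 {n q : ℕ} (A : Euc n →L[ℝ] Euc q) (b : Euc q) (μ δ γ : ℝ)
    (hμ0 : 0 ≤ μ) (hμ1 : μ ≤ 1) (hδ : 0 < δ) (hγ : 0 < γ)
    (hA : Function.Surjective (⇑A))
    (g' : Euc n → Euc n)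
    (hg' : ∀ x, HasGradientAt (fun z => LorNorm γ (A z - b) - δ) (g' x) x) :
    (∀ xhat : Euc n, LorNorm γ (A xhat - b) - δ = 0 →
      g' xhat ≠ 0 ∧ ∃ d : Euc n, ⟪g' xhat, d⟫ < 0) ∧
    (μ < 1 → ∀ σ : ℝ, IsBounded {x : Euc n | Flor A b μ δ γ x ≤ ((σ : ℝ) : EReal)}) ∧
    (μ = 1 → (∀ j : Fin n, A (EuclideanSpace.single j (1 : ℝ)) ≠ 0) →
      ∀ σ : ℝ, IsBounded {x : Euc n | Flor A b μ δ γ x ≤ ((σ : ℝ) : EReal)}) := by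
  refine ⟨?_, ?_, ?_⟩
  · -- Part (i): MFCQ
    intro xhat hx
    set y : Euc q := A xhat - b with hy
    have hyδ : LorNorm γ y = δ := by linarith
    have hy0 : y ≠ 0 := by
      intro h
      rw [h] at hyδ
      simp [LorNorm] at hyδ
      exact absurd hyδ (by linarith)
    obtain ⟨d, hd⟩ := hA (-y)
    have h1 : HasDerivAt (fun t : ℝ => LorNorm γ (A (xhat + t • d) - b) - δ)
        (⟪g' xhat, d⟫) 0 := by
      have hline : HasDerivAt (fun t : ℝ => xhat + t • d) d 0 := by
        simpa using ((hasDerivAt_id (0:ℝ)).smul_const d).const_add xhat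
      have hfd : HasFDerivAt (fun z => LorNorm γ (A z - b) - δ)
          ((InnerProductSpace.toDual ℝ (Euc n)) (g' xhat)) (xhat + (0:ℝ) • d) := by
        simpa using (hg' xhat).hasFDerivAt
      have h0 := hfd.comp_hasDerivAt 0 hline
      simp only [Function.comp, InnerProductSpace.toDual_apply_apply] at h0
      exact h0
    have h2 : HasDerivAt (fun t : ℝ => LorNorm γ (A (xhat + t • d) - b) - δ)
        (∑ i, (2 * (y i) * (-(y i)) / γ ^ 2 / (1 + (y i) ^ 2 / γ ^ 2))) 0 := by
      have heq : (fun t : ℝ => LorNorm γ (A (xhat + t • d) - b) - δ)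
          = fun t => (∑ i, Real.log (1 + ((1 - t) * y i) ^ 2 / γ ^ 2)) - δ := by
        funext t
        have hAeq : A (xhat + t • d) - b = (1 - t) • y := by
          rw [map_add, map_smul, hd]
          rw [hy]
          module
        rw [hAeq]
        unfold LorNorm
        congr 1
      rw [heq]
      apply HasDerivAt.sub_const
      apply HasDerivAt.fun_sum
      intro i _
      have hc : HasDerivAt (fun t : ℝ => (1 - t) * y i) (-(y i)) 0 := by
        simpa using ((hasDerivAt_const (0:ℝ) (1:ℝ)).sub (hasDerivAt_id 0)).mul_const (y i)
      have hpow := hc.fun_pow 2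
      have hdiv := hpow.div_const (γ ^ 2)
      have hadd := hdiv.const_add 1
      have hlog := hadd.log (by positivity)
      exact hlog.congr_deriv (by norm_num)
    have key : ⟪g' xhat, d⟫
        = ∑ i, (2 * (y i) * (-(y i)) / γ ^ 2 / (1 + (y i) ^ 2 / γ ^ 2)) :=
      h1.unique h2
    have hneg : ∑ i, (2 * (y i) * (-(y i)) / γ ^ 2 / (1 + (y i) ^ 2 / γ ^ 2)) < 0 := by
      obtain ⟨i0, hi0⟩ : ∃ i, y i ≠ 0 := by
        by_contra h
        push_neg at h
        exact hy0 (PiLp.ext (fun i => by simp [h i]))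
      have hsum := Finset.sum_lt_sum (s := Finset.univ)
        (f := fun i => 2 * (y i) * (-(y i)) / γ ^ 2 / (1 + (y i) ^ 2 / γ ^ 2))
        (g := fun _ => (0:ℝ))
        (fun i _ => by
          have h1 : (0:ℝ) < 1 + (y i) ^ 2 / γ ^ 2 := by positivity
          have h2 : 2 * (y i) * (-(y i)) / γ ^ 2 ≤ 0 := by
            have he : 2 * (y i) * (-(y i)) = -(2 * (y i) ^ 2) := by ring
            rw [he]
            apply div_nonpos_of_nonpos_of_nonneg
            · nlinarith [sq_nonneg (y i)]
            · positivity
          exact div_nonpos_of_nonpos_of_nonneg h2 h1.le)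
        ⟨i0, Finset.mem_univ i0, by
          have h1 : (0:ℝ) < 1 + (y i0) ^ 2 / γ ^ 2 := by positivity
          have h2 : 2 * (y i0) * (-(y i0)) / γ ^ 2 < 0 := by
            have he : 2 * (y i0) * (-(y i0)) = -(2 * (y i0) ^ 2) := by ring
            rw [he]
            apply div_neg_of_neg_of_pos
            · have h3 : 0 < (y i0) ^ 2 :=
                lt_of_le_of_ne (sq_nonneg _) (Ne.symm (pow_ne_zero 2 hi0))
              nlinarith
            · positivity
          exact div_neg_of_neg_of_pos h2 h1⟩
      simpa using hsum
    have hlt : ⟪g' xhat, d⟫ < 0 := key ▸ hneg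
    refine ⟨fun h0 => ?_, ⟨d, hlt⟩⟩
    rw [h0, inner_zero_left] at hlt
    exact lt_irrefl _ hlt
  · -- Part (ii): μ < 1
    intro hμ σ
    apply (isBounded_closedBall (x := (0 : Euc n)) (r := σ / (1 - μ))).subset
    intro x hx
    obtain ⟨-, hx'⟩ := flor_mem hx
    have h2 := norm_le_l1 x
    rw [mem_closedBall_zero_iff]
    rw [le_div_iff₀ (by linarith)]
    nlinarith
  · -- Part (iii): μ = 1
    intro hμeq hcols σ
    subst hμeq
    rcases Nat.eq_zero_or_pos n with hn | hn
    · subst hn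
      apply (isBounded_closedBall (x := (0 : Euc 0)) (r := 0)).subset
      intro x _
      rw [mem_closedBall_zero_iff, Subsingleton.elim x 0, norm_zero]
    haveI : Nonempty (Fin n) := ⟨⟨0, hn⟩⟩
    set c0 : ℝ := Finset.univ.inf' Finset.univ_nonempty
      (fun j : Fin n => ‖A (EuclideanSpace.single j (1:ℝ))‖) with hc0def
    have hc0 : 0 < c0 := by
      rw [hc0def, Finset.lt_inf'_iff]
      exact fun j _ => norm_pos_iff.mpr (hcols j)
    set R : ℝ := Real.sqrt (q * (γ ^ 2 * (Real.exp δ - 1))) with hRdef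
    set M : ℝ := (R + ‖b‖ + ‖A‖ * (n * σ)) / c0 + n * σ with hMdef
    apply (isBounded_closedBall (x := (0 : Euc n)) (r := M)).subset
    intro x hx
    obtain ⟨hcon, hx'⟩ := flor_mem hx
    rw [one_mul] at hx'
    set s := l1norm x with hs
    set t := ‖x‖ with ht
    have hts : t ≤ s := norm_le_l1 x
    have hσ0 : 0 ≤ σ := by linarith
    obtain ⟨j, -, hj⟩ := Finset.exists_max_image Finset.univ (fun i => |x i|)
      Finset.univ_nonempty
    set m := |x j| with hm
    set r : ℝ := ∑ i ∈ Finset.univ.erase j, |x i| with hr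
    have hsm : s = m + r := by
      rw [hs, hm, hr]
      exact (Finset.add_sum_erase _ _ (Finset.mem_univ j)).symm
    have hr0 : 0 ≤ r := Finset.sum_nonneg fun i _ => abs_nonneg _
    have hm0 : 0 ≤ m := abs_nonneg _
    have hs0 : 0 ≤ s := by linarith
    have hsum_sq : t ^ 2 ≤ m ^ 2 + r ^ 2 := by
      have h1 : t ^ 2 = ∑ i, (x i) ^ 2 := by
        rw [ht, EuclideanSpace.norm_eq, Real.sq_sqrt (by positivity)]
        simp [Real.norm_eq_abs, sq_abs]
      have h2 : ∑ i, (x i) ^ 2 = (x j) ^ 2 + ∑ i ∈ Finset.univ.erase j, (x i) ^ 2 :=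
        (Finset.add_sum_erase _ _ (Finset.mem_univ j)).symm
      have h3 : ∑ i ∈ Finset.univ.erase j, (x i) ^ 2 ≤ r ^ 2 := by
        rw [hr]
        simpa [sq_abs] using Finset.sum_sq_le_sq_sum_of_nonneg
          (f := fun i => |x i|) (s := Finset.univ.erase j) (fun i _ => abs_nonneg _)
      rw [h1, h2]
      have h4 : (x j) ^ 2 = m ^ 2 := (sq_abs _).symm
      linarith
    have hmr : m * r ≤ σ * s := by nlinarith
    have hsnm : s ≤ n * m := by
      have h1 : ∀ i ∈ Finset.univ, |x i| ≤ m := fun i _ => hj i (Finset.mem_univ i)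
      calc s = ∑ i, |x i| := hs
        _ ≤ Finset.univ.card • m := Finset.sum_le_card_nsmul _ _ _ h1
        _ = n * m := by simp [Finset.card_univ, nsmul_eq_mul]
    have hrle : r ≤ n * σ := by
      rcases eq_or_lt_of_le hs0 with hs1 | hs1
      · have h1 : r ≤ s := by linarith
        have hn0 : (0:ℝ) ≤ n := Nat.cast_nonneg n
        nlinarith
      · have h1 : r * s ≤ (n * σ) * s := by nlinarith
        exact le_of_mul_le_mul_right h1 hs1
    have hAx : ‖A x - b‖ ≤ R := lor_bound hγ _ (by linarith)
    have hAej : c0 ≤ ‖A (EuclideanSpace.single j (1:ℝ))‖ :=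
      Finset.inf'_le _ (Finset.mem_univ j)
    set xr : Euc n := x - (x j) • EuclideanSpace.single j (1:ℝ) with hxr
    have hxl1 : l1norm xr = r := by
      have hcoord : ∀ i, |xr i| = if i = j then 0 else |x i| := by
        intro i
        have h5 : xr i = x i - x j * (if i = j then 1 else 0) := by
          simp [hxr, EuclideanSpace.single_apply]
        rw [h5]
        by_cases h : i = j
        · subst h; simp
        · simp [h]
      calc l1norm xr = ∑ i, (if i = j then 0 else |x i|) :=
            Finset.sum_congr rfl fun i _ => hcoord i
        _ = (if j = j then 0 else |x j|)
            + ∑ i ∈ Finset.univ.erase j, (if i = j then 0 else |x i|) :=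
            (Finset.add_sum_erase _ _ (Finset.mem_univ j)).symm
        _ = ∑ i ∈ Finset.univ.erase j, |x i| := by
            rw [if_pos rfl, zero_add]
            refine Finset.sum_congr rfl fun i hi => ?_
            rw [if_neg (Finset.mem_erase.mp hi).1]
        _ = r := hr.symm
    have hxrn : ‖xr‖ ≤ r := hxl1 ▸ norm_le_l1 xr
    have hmM : m ≤ (R + ‖b‖ + ‖A‖ * (n * σ)) / c0 := by
      rw [le_div_iff₀ hc0]
      have h1 : m * ‖A (EuclideanSpace.single j (1:ℝ))‖
          = ‖A ((x j) • EuclideanSpace.single j (1:ℝ))‖ := by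
        rw [A.map_smul, norm_smul, Real.norm_eq_abs, hm]
      have h2 : A ((x j) • EuclideanSpace.single j (1:ℝ)) = (A x - b) + b - A xr := by
        rw [hxr, map_sub]
        abel
      have h3 : ‖A ((x j) • EuclideanSpace.single j (1:ℝ))‖
          ≤ R + ‖b‖ + ‖A‖ * (n * σ) := by
        rw [h2]
        have h4 : ‖A xr‖ ≤ ‖A‖ * (n * σ) := by
          calc ‖A xr‖ ≤ ‖A‖ * ‖xr‖ := A.le_opNorm xr
            _ ≤ ‖A‖ * (n * σ) := by
                apply mul_le_mul_of_nonneg_left _ (norm_nonneg A)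
                linarith
        calc ‖(A x - b) + b - A xr‖ ≤ ‖(A x - b) + b‖ + ‖A xr‖ := norm_sub_le _ _
          _ ≤ ‖A x - b‖ + ‖b‖ + ‖A xr‖ := by
              have h5 := norm_add_le (A x - b) b
              linarith
          _ ≤ R + ‖b‖ + ‖A‖ * (n * σ) := by linarith
      calc m * c0 ≤ m * ‖A (EuclideanSpace.single j (1:ℝ))‖ :=
            mul_le_mul_of_nonneg_left hAej hm0
        _ ≤ R + ‖b‖ + ‖A‖ * (n * σ) := by rw [h1]; exact h3
    rw [mem_closedBall_zero_iff]
    calc ‖x‖ = t := ht.symm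
      _ ≤ s := hts
      _ = m + r := hsm
      _ ≤ M := by rw [hMdef]; linarith
end
end
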